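/- Let p be a prime, let f, g : F_p → ℂ and K : F_p × F_p → ℂ. Then the quantity I = ( Σ_{s ∈ F_p} | Σ_{x ∈ F_p} K(s − x, x) · f(s − x) · g(x) |² )^(1/2) satisfies I ≤ ‖f‖_{ℓ²}^(1/2) · ‖f‖_{ℓ⁴}^(1/2) · ‖g‖_{ℓ²} · Ω^(1/4), where Ω = ( Σ_{s,u,v ∈ F_p} | Σ_{x ∈ F_p} K(x, s − x) · conj(K(x + u, s − x)) · conj(K(x, s + v − x)) · K(x + u, s + v − x) |² )^(1/2). -/

import Mathlib

/-!
Expanding the square, `I²` is the Hermitian form of `g` against the Gram matrix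
`H x x' = ∑ s, A s x * conj (A s x')` of `A s x = K (s - x) x * f (s - x)`, so Cauchy–Schwarz gives
`I⁴ ≤ ‖g‖₂⁴ ∑ |H|²`. Since `∑ |A A*|² = ∑ |A* A|²`, the substitution `s' = s + u` turns `∑ |H|²` into a
sum over `u` of quantities of the same shape as `I²`, with `g` replaced by `f · conj (f (· + u))`
and the kernel by `K a (s - a) * conj (K (a + u) (s - a))`. Applying the same bound again, then
Cauchy–Schwarz in `u` and `∑ u, (∑ a, |f a|² |f (a + u)|²)² ≤ ‖f‖₄⁴ ‖f‖₂⁴`, yields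
`I⁸ ≤ ‖g‖₂⁸ ‖f‖₄⁴ ‖f‖₂⁴ Ω²`.
-/

open Finset

/-- Unnormalized ℓ²-norm. -/
noncomputable def l2 (p : ℕ) [NeZero p] (f : ZMod p → ℂ) : ℝ :=
  (∑ x : ZMod p, ‖f x‖ ^ 2) ^ ((1 : ℝ) / 2)

/-- Unnormalized ℓ⁴-norm. -/
noncomputable def l4 (p : ℕ) [NeZero p] (f : ZMod p → ℂ) : ℝ :=
  (∑ x : ZMod p, ‖f x‖ ^ 4) ^ ((1 : ℝ) / 4)

/-- The quantity Ω associated to a kernel K. -/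
noncomputable def bigOmega (p : ℕ) [NeZero p] (K : ZMod p → ZMod p → ℂ) : ℝ :=
  (∑ s : ZMod p, ∑ u : ZMod p, ∑ v : ZMod p,
    ‖∑ x : ZMod p,
      K x (s - x) * star (K (x + u) (s - x)) * star (K x (s + v - x)) *
        K (x + u) (s + v - x)‖ ^ 2) ^ ((1 : ℝ) / 2)

section Gram

variable {σ ι : Type*} [Fintype σ] [Fintype ι]

lemma Complex.sq_norm_eq_mul_star (z : ℂ) : (‖z‖ : ℂ) ^ 2 = z * star z :=
  (Complex.mul_conj' z).symm

theorem sum_norm_sq_sum_mul_le (A : σ → ι → ℂ) (g : ι → ℂ) :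
    (∑ s, ‖∑ x, A s x * g x‖ ^ 2) ^ 2 ≤
      (∑ x, ‖g x‖ ^ 2) ^ 2 * ∑ x, ∑ x', ‖∑ s, A s x * star (A s x')‖ ^ 2 := by
  set H : ι → ι → ℂ := fun x x' => ∑ s, A s x * star (A s x')
  have expand : ((∑ s, ‖∑ x, A s x * g x‖ ^ 2 : ℝ) : ℂ)
      = ∑ x, ∑ x', g x * star (g x') * H x x' := by
    push_cast
    simp_rw [Complex.sq_norm_eq_mul_star, star_sum, sum_mul_sum]
    rw [sum_comm]
    refine sum_congr rfl fun x _ => ?_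
    rw [sum_comm]
    refine sum_congr rfl fun x' _ => ?_
    rw [mul_sum]
    refine sum_congr rfl fun s _ => ?_
    simp only [star_mul]
    ring
  have hP : ∑ s, ‖∑ x, A s x * g x‖ ^ 2 ≤ ∑ x, ∑ x', ‖g x‖ * ‖g x'‖ * ‖H x x'‖ := by
    calc _ = ‖((∑ s, ‖∑ x, A s x * g x‖ ^ 2 : ℝ) : ℂ)‖ :=
          (Complex.norm_of_nonneg (by positivity)).symm
      _ ≤ _ := by
          rw [expand]
          refine (norm_sum_le _ _).trans (sum_le_sum fun x _ => (norm_sum_le _ _).trans ?_)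
          simp
  calc _ ≤ (∑ x, ∑ x', ‖g x‖ * ‖g x'‖ * ‖H x x'‖) ^ 2 := by gcongr
    _ ≤ (∑ x, ∑ x', (‖g x‖ * ‖g x'‖) ^ 2) * ∑ x, ∑ x', ‖H x x'‖ ^ 2 := by
        simp only [← Fintype.sum_prod_type']
        exact sum_mul_sq_le_sq_mul_sq _ _ _
    _ = _ := by simp_rw [mul_pow, ← mul_sum, ← sum_mul]; ring

theorem sum_norm_sq_gram_comm (A : σ → ι → ℂ) :
    ∑ x, ∑ x', ‖∑ s, A s x * star (A s x')‖ ^ 2 = ∑ s, ∑ s', ‖∑ x, A s x * star (A s' x)‖ ^ 2 := by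
  refine Complex.ofReal_injective ?_
  push_cast
  simp_rw [Complex.sq_norm_eq_mul_star, star_sum, sum_mul_sum]
  simp only [← Fintype.sum_prod_type']
  refine Fintype.sum_equiv (((Equiv.prodAssoc ι ι (σ × σ)).symm.trans (Equiv.prodComm _ _)).trans
    (Equiv.prodAssoc σ σ (ι × ι))) _ _ fun _ => ?_
  simp only [Equiv.trans_apply, Equiv.prodAssoc_symm_apply, Equiv.prodComm_apply, Prod.swap,
    Equiv.prodAssoc_apply, star_mul, star_star]
  ring

end Gram

section AddGroup

variable {G : Type*} [AddCommGroup G] [Fintype G]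

theorem sum_sum_eq_sum_sum_add {M : Type*} [AddCommMonoid M] (F : G → G → M) :
    ∑ s, ∑ s', F s s' = ∑ u, ∑ s, F s (s + u) := by
  calc _ = ∑ s, ∑ u, F s (s + u) :=
        sum_congr rfl fun s _ => (Equiv.sum_comp (Equiv.addLeft s) (F s)).symm
    _ = _ := sum_comm

theorem sum_sq_sum_norm_sq_mul_shift_le (f : G → ℂ) :
    ∑ u, (∑ a, ‖f a * star (f (a + u))‖ ^ 2) ^ 2 ≤ (∑ a, ‖f a‖ ^ 4) * (∑ a, ‖f a‖ ^ 2) ^ 2 := by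
  set E : G → ℝ := fun u => ∑ a, ‖f a * star (f (a + u))‖ ^ 2
  have hE : ∀ u, E u = ∑ a, ‖f a‖ ^ 2 * ‖f (a + u)‖ ^ 2 := fun u => by simp [E, mul_pow]
  have hE_le : ∀ u, E u ≤ ∑ a, ‖f a‖ ^ 4 := fun u => by
    have hshift : ∑ a, ‖f (a + u)‖ ^ 4 = ∑ a, ‖f a‖ ^ 4 :=
      Equiv.sum_comp (Equiv.addRight u) fun a => ‖f a‖ ^ 4
    rw [hE]
    calc _ ≤ ∑ a, (‖f a‖ ^ 4 + ‖f (a + u)‖ ^ 4) / 2 := sum_le_sum fun a _ => by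
          nlinarith [sq_nonneg (‖f a‖ ^ 2 - ‖f (a + u)‖ ^ 2)]
      _ = _ := by rw [← sum_div, sum_add_distrib, hshift]; ring
  have hE_sum : ∑ u, E u = (∑ a, ‖f a‖ ^ 2) ^ 2 := by
    calc ∑ u, E u = ∑ a, ‖f a‖ ^ 2 * ∑ u, ‖f (a + u)‖ ^ 2 := by
          simp_rw [hE, mul_sum]; exact sum_comm
      _ = _ := by
          rw [sq, sum_mul]
          exact sum_congr rfl fun a _ =>
            congrArg _ (Equiv.sum_comp (Equiv.addLeft a) fun b => ‖f b‖ ^ 2)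
  calc ∑ u, E u ^ 2 ≤ ∑ u, (∑ a, ‖f a‖ ^ 4) * E u :=
        sum_le_sum fun u _ => by
          rw [sq]; exact mul_le_mul_of_nonneg_right (hE_le u) (sum_nonneg fun _ _ => by positivity)
    _ = _ := by rw [← mul_sum, hE_sum]

theorem sum_norm_sq_twisted_conv_sq_le (f g : G → ℂ) (K : G → G → ℂ) :
    (∑ s, ‖∑ x, K (s - x) x * f (s - x) * g x‖ ^ 2) ^ 2 ≤
      (∑ x, ‖g x‖ ^ 2) ^ 2 *
        ∑ u, ∑ s, ‖∑ a, K a (s - a) * star (K (a + u) (s - a)) * (f a * star (f (a + u)))‖ ^ 2 := by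
  refine (sum_norm_sq_sum_mul_le (fun s x => K (s - x) x * f (s - x)) g).trans_eq ?_
  rw [sum_norm_sq_gram_comm, sum_sum_eq_sum_sum_add]
  congr! 5 with u _ s
  refine (Equiv.sum_comp (Equiv.subLeft s) _).symm.trans (sum_congr rfl fun a _ => ?_)
  rw [Equiv.subLeft_apply, sub_sub_cancel, show s + u - (s - a) = a + u by abel]
  simp only [star_mul]
  ring

theorem sq_sum_norm_sq_twisted_le (f : G → ℂ) (K : G → G → ℂ) :
    (∑ u, ∑ s, ‖∑ a, K a (s - a) * star (K (a + u) (s - a)) * (f a * star (f (a + u)))‖ ^ 2) ^ 2 ≤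
      (∑ a, ‖f a‖ ^ 4) * (∑ a, ‖f a‖ ^ 2) ^ 2 *
        ∑ s, ∑ u, ∑ v, ‖∑ x, K x (s - x) * star (K (x + u) (s - x)) * star (K x (s + v - x)) *
          K (x + u) (s + v - x)‖ ^ 2 := by
  set B : G → G → G → ℂ := fun u s a => K a (s - a) * star (K (a + u) (s - a))
  have hu : ∀ u, (∑ s, ‖∑ a, B u s a * (f a * star (f (a + u)))‖ ^ 2) ^ 2 ≤
      (∑ a, ‖f a * star (f (a + u))‖ ^ 2) ^ 2 *
        ∑ v, ∑ s, ‖∑ a, B u s a * star (B u (s + v) a)‖ ^ 2 := fun u => by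
    have := sum_norm_sq_sum_mul_le (B u) fun a => f a * star (f (a + u))
    rwa [sum_norm_sq_gram_comm, sum_sum_eq_sum_sum_add] at this
  calc _ ≤ (∑ u, (∑ a, ‖f a * star (f (a + u))‖ ^ 2) ^ 2) *
        ∑ u, ∑ v, ∑ s, ‖∑ a, B u s a * star (B u (s + v) a)‖ ^ 2 :=
        sum_sq_le_sum_mul_sum_of_sq_le_mul _ (fun _ _ => by positivity)
          (fun _ _ => by positivity) fun u _ => hu u
    _ ≤ (∑ a, ‖f a‖ ^ 4) * (∑ a, ‖f a‖ ^ 2) ^ 2 *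
        ∑ u, ∑ v, ∑ s, ‖∑ a, B u s a * star (B u (s + v) a)‖ ^ 2 := by
        gcongr ?_ * _
        exact sum_sq_sum_norm_sq_mul_shift_le f
    _ = _ := by
        congr 1
        rw [← sum_congr rfl fun u _ => sum_comm, sum_comm]
        simp only [B, star_mul', star_star, mul_assoc]

theorem sum_norm_sq_twisted_conv_pow_four_le (f g : G → ℂ) (K : G → G → ℂ) :
    (∑ s, ‖∑ x, K (s - x) x * f (s - x) * g x‖ ^ 2) ^ 4 ≤
      (∑ x, ‖g x‖ ^ 2) ^ 4 * ((∑ a, ‖f a‖ ^ 4) * (∑ a, ‖f a‖ ^ 2) ^ 2 *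
        ∑ s, ∑ u, ∑ v, ‖∑ x, K x (s - x) * star (K (x + u) (s - x)) * star (K x (s + v - x)) *
          K (x + u) (s + v - x)‖ ^ 2) := by
  calc _ = ((∑ s, ‖∑ x, K (s - x) x * f (s - x) * g x‖ ^ 2) ^ 2) ^ 2 := by ring
    _ ≤ ((∑ x, ‖g x‖ ^ 2) ^ 2 * ∑ u, ∑ s,
          ‖∑ a, K a (s - a) * star (K (a + u) (s - a)) * (f a * star (f (a + u)))‖ ^ 2) ^ 2 := by
        gcongr
        exact sum_norm_sq_twisted_conv_sq_le f g K
    _ ≤ _ := by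
        rw [mul_pow, ← pow_mul]
        gcongr
        exact sq_sum_norm_sq_twisted_le f K

end AddGroup

theorem stmt3_general (p : ℕ) [NeZero p] (f g : ZMod p → ℂ) (K : ZMod p → ZMod p → ℂ) :
    (∑ s : ZMod p, ‖∑ x : ZMod p, K (s - x) x * f (s - x) * g x‖ ^ 2) ^ ((1 : ℝ) / 2)
      ≤ l2 p f ^ ((1 : ℝ) / 2) * l4 p f ^ ((1 : ℝ) / 2) * l2 p g *
        bigOmega p K ^ ((1 : ℝ) / 4) := by
  have key := sum_norm_sq_twisted_conv_pow_four_le f g K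
  rw [← pow_le_pow_iff_left₀ (by positivity)
    (by unfold l2 l4 bigOmega; positivity) (by norm_num : 8 ≠ 0)]
  simp (disch := positivity) only [mul_pow, l2, l4, bigOmega, ← Real.rpow_mul_natCast,
    ← Real.rpow_mul]
  norm_num only [Nat.cast_ofNat, Real.rpow_ofNat, Real.rpow_one]
  exact key.trans_eq (by ring)

theorem stmt3 (p : ℕ) [NeZero p] (hp : p.Prime) (f g : ZMod p → ℂ) (K : ZMod p → ZMod p → ℂ) :
    (∑ s : ZMod p, ‖∑ x : ZMod p, K (s - x) x * f (s - x) * g x‖ ^ 2) ^ ((1 : ℝ) / 2)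
      ≤ l2 p f ^ ((1 : ℝ) / 2) * l4 p f ^ ((1 : ℝ) / 2) * l2 p g *
        bigOmega p K ^ ((1 : ℝ) / 4) :=
  stmt3_general p f g K
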